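/- Suppose a finite group G = AB is a central product. Then G ∈ CD(G) if and only if A ∈ CD(A) and B ∈ CD(B). -/

import Mathlib

open scoped Pointwise

/-- Relative Chermak–Delgado measure `m_W(K) = |K| * |C_W(K)|`. -/
noncomputable def m {G : Type*} [Group G] (W K : Subgroup G) : ℕ :=
  Nat.card K * Nat.card (W ⊓ Subgroup.centralizer (K : Set G) : Subgroup G)

/-- The Chermak–Delgado lattice of `W`: subgroups of `W` maximizing `m W`. -/
def CD {G : Type*} [Group G] (W : Subgroup G) : Set (Subgroup G) :=
  {K | K ≤ W ∧ ∀ L ≤ W, m W L ≤ m W K}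

/-- `m*(W)`, the maximal Chermak–Delgado measure over subgroups of `W`. -/
noncomputable def mstar {G : Type*} [Group G] (W : Subgroup G) : ℕ :=
  ⨆ K : {K : Subgroup G // K ≤ W}, m W K

open Subgroup

section Aux

set_option linter.unusedVariables false
set_option linter.unusedSectionVars false

variable {G : Type*} [Group G]


lemma cardle [Finite G] {P Q : Subgroup G} (h : P ≤ Q) : Nat.card P ≤ Nat.card Q :=
  Nat.card_le_card_of_injective _ (Subgroup.inclusion_injective h)

lemma card_eq_mul_relIndex {P Q : Subgroup G} (h : Q ≤ P) :
    Nat.card P = Nat.card Q * Q.relIndex P := by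
  rw [show Q.relIndex P = (Q.subgroupOf P).index from rfl,
    ← Subgroup.card_mul_index (Q.subgroupOf P)]
  congr 1
  exact Nat.card_congr (Subgroup.subgroupOfEquivOfLe h).toEquiv

lemma GEN [Finite G] (P Q : Subgroup G) :
    Nat.card P * Nat.card Q ≤ Nat.card (P ⊔ Q : Subgroup G) * Nat.card (P ⊓ Q : Subgroup G) := by
  rw [card_eq_mul_relIndex (inf_le_left : P ⊓ Q ≤ P),
      card_eq_mul_relIndex (le_sup_right : Q ≤ P ⊔ Q)]
  have h1 : (P ⊓ Q).relIndex P = Q.relIndex P := Subgroup.inf_relIndex_left P Q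
  have h2 : Q.relIndex P ≤ Q.relIndex (P ⊔ Q) :=
    Subgroup.relIndex_le_of_le_right le_sup_left
      (Subgroup.index_ne_zero_of_finite (H := Q.subgroupOf (P ⊔ Q)))
  calc Nat.card (P ⊓ Q : Subgroup G) * (P ⊓ Q).relIndex P * Nat.card Q
      = Q.relIndex P * (Nat.card Q * Nat.card (P ⊓ Q : Subgroup G)) := by rw [h1]; ring
    _ ≤ Q.relIndex (P ⊔ Q) * (Nat.card Q * Nat.card (P ⊓ Q : Subgroup G)) := by
        exact Nat.mul_le_mul_right _ h2
    _ = Nat.card Q * Q.relIndex (P ⊔ Q) * Nat.card (P ⊓ Q : Subgroup G) := by ring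

lemma EQN (H N : Subgroup G) [N.Normal] :
    Nat.card (H ⊔ N : Subgroup G) * Nat.card (H ⊓ N : Subgroup G) = Nat.card H * Nat.card N := by
  rw [card_eq_mul_relIndex (le_sup_right : N ≤ H ⊔ N),
      card_eq_mul_relIndex (inf_le_left : H ⊓ N ≤ H),
      Subgroup.relIndex_sup_right]
  have : (H ⊓ N).relIndex H = N.relIndex H := by
    rw [inf_comm]; exact Subgroup.inf_relIndex_right N H
  rw [this]; ring

lemma m_top [Finite G] (K : Subgroup G) :
    m ⊤ K = Nat.card K * Nat.card (Subgroup.centralizer (K : Set G)) := by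
  rw [m, top_inf_eq]

lemma m_pos [Finite G] (W K : Subgroup G) : 0 < m W K :=
  Nat.mul_pos Nat.card_pos Nat.card_pos

lemma cent_inf_le (U V : Subgroup G) :
    Subgroup.centralizer (U : Set G) ⊓ Subgroup.centralizer (V : Set G) ≤
      Subgroup.centralizer ((U ⊔ V : Subgroup G) : Set G) := by
  rintro x ⟨hxu, hxv⟩
  rw [Subgroup.mem_centralizer_iff]
  intro h hh
  have : (U ⊔ V : Subgroup G) ≤ Subgroup.centralizer {x} := by
    refine sup_le ?_ ?_ <;> intro u hu <;> rw [Subgroup.mem_centralizer_iff] <;>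
      rintro y rfl
    · exact (hxu u hu).symm
    · exact (hxv u hu).symm
  exact (this hh x rfl).symm

lemma m_sup_inf [Finite G] (U V : Subgroup G) :
    m ⊤ U * m ⊤ V ≤ m ⊤ (U ⊔ V) * m ⊤ (U ⊓ V) := by
  rw [m_top, m_top, m_top, m_top]
  have h1 : Nat.card U * Nat.card V ≤
      Nat.card (U ⊔ V : Subgroup G) * Nat.card (U ⊓ V : Subgroup G) := GEN U V
  have h2 : Nat.card (Subgroup.centralizer (U : Set G)) *
      Nat.card (Subgroup.centralizer (V : Set G)) ≤
      Nat.card (Subgroup.centralizer ((U ⊔ V : Subgroup G) : Set G)) *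
      Nat.card (Subgroup.centralizer ((U ⊓ V : Subgroup G) : Set G)) := by
    calc Nat.card (Subgroup.centralizer (U : Set G)) *
        Nat.card (Subgroup.centralizer (V : Set G))
        ≤ Nat.card (Subgroup.centralizer (U : Set G) ⊔ Subgroup.centralizer (V : Set G) :
            Subgroup G) *
          Nat.card (Subgroup.centralizer (U : Set G) ⊓ Subgroup.centralizer (V : Set G) :
            Subgroup G) := GEN _ _
      _ ≤ Nat.card (Subgroup.centralizer ((U ⊓ V : Subgroup G) : Set G)) *
          Nat.card (Subgroup.centralizer ((U ⊔ V : Subgroup G) : Set G)) := by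
          refine Nat.mul_le_mul (cardle ?_) (cardle (cent_inf_le U V))
          refine sup_le (Subgroup.centralizer_le ?_) (Subgroup.centralizer_le ?_)
          · exact SetLike.coe_subset_coe.2 inf_le_left
          · exact SetLike.coe_subset_coe.2 inf_le_right
      _ = _ := mul_comm _ _
  calc Nat.card U * Nat.card (Subgroup.centralizer (U : Set G)) *
      (Nat.card V * Nat.card (Subgroup.centralizer (V : Set G)))
      = Nat.card U * Nat.card V * (Nat.card (Subgroup.centralizer (U : Set G)) *
        Nat.card (Subgroup.centralizer (V : Set G))) := by ring
    _ ≤ Nat.card (U ⊔ V : Subgroup G) * Nat.card (U ⊓ V : Subgroup G) *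
        (Nat.card (Subgroup.centralizer ((U ⊔ V : Subgroup G) : Set G)) *
        Nat.card (Subgroup.centralizer ((U ⊓ V : Subgroup G) : Set G))) :=
        Nat.mul_le_mul h1 h2
    _ = _ := by ring

section CentralProduct

variable {A B : Subgroup G}
variable (hG : ∀ g : G, ∃ a ∈ A, ∃ b ∈ B, g = a * b)
variable (hcomm : ∀ a ∈ A, ∀ b ∈ B, a * b = b * a)

include hG hcomm in
lemma normalB : B.Normal := by
  constructor
  intro n hn g
  obtain ⟨a, ha, b, hb, rfl⟩ := hG g
  have h1 : a * (b * n * b⁻¹) = (b * n * b⁻¹) * a :=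
    hcomm a ha _ (mul_mem (mul_mem hb hn) (inv_mem hb))
  have : a * b * n * (a * b)⁻¹ = b * n * b⁻¹ := by
    rw [mul_inv_rev,
      show a * b * n * (b⁻¹ * a⁻¹) = a * (b * n * b⁻¹) * a⁻¹ from by group, h1,
      mul_inv_cancel_right]
  rw [this]
  exact mul_mem (mul_mem hb hn) (inv_mem hb)

include hG hcomm in
lemma commZB : ∀ y ∈ B ⊓ Subgroup.centralizer (B : Set G), ∀ g : G, g * y = y * g := by
  rintro y ⟨hyB, hyC⟩ g
  obtain ⟨a, ha, b, hb, rfl⟩ := hG g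
  have h1 : b * y = y * b := hyC b hb
  have h2 : a * y = y * a := hcomm a ha y hyB
  calc a * b * y = a * (y * b) := by rw [mul_assoc, h1]
    _ = y * (a * b) := by rw [← mul_assoc, h2, mul_assoc]

lemma normal_of_comm {S : Subgroup G} (h : ∀ y ∈ S, ∀ g : G, g * y = y * g) : S.Normal := by
  constructor
  intro n hn g
  have : g * n * g⁻¹ = n := by rw [h n hn g, mul_inv_cancel_right]
  rw [this]; exact hn

include hG in
lemma sup_decomp {W : Subgroup G} (hBW : B ≤ W) : W = (W ⊓ A) ⊔ B := by
  refine le_antisymm ?_ (sup_le inf_le_left hBW)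
  intro w hw
  obtain ⟨a, ha, b, hb, rfl⟩ := hG w
  have hbW : b ∈ W := hBW hb
  have haW : a ∈ W := by
    have : a = a * b * b⁻¹ := by group
    rw [this]; exact mul_mem hw (inv_mem hbW)
  exact mul_mem (le_sup_left (α := Subgroup G) ⟨haW, ha⟩) (le_sup_right (α := Subgroup G) hb)

lemma inf_decomp {W : Subgroup G} (hBW : B ≤ W) : (W ⊓ A) ⊓ B = A ⊓ B := by
  refine le_antisymm ?_ ?_
  · rintro x ⟨⟨_, hxA⟩, hxB⟩; exact ⟨hxA, hxB⟩
  · rintro x ⟨hxA, hxB⟩; exact ⟨⟨hBW hxB, hxA⟩, hxB⟩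

include hG hcomm in
lemma cent_decomp {W : Subgroup G} (hBW : B ≤ W) :
    Subgroup.centralizer (W : Set G) =
      (A ⊓ Subgroup.centralizer ((W ⊓ A : Subgroup G) : Set G)) ⊔
        (B ⊓ Subgroup.centralizer (B : Set G)) := by
  refine le_antisymm ?_ (sup_le ?_ ?_)
  · intro g hg
    rw [Subgroup.mem_centralizer_iff] at hg
    obtain ⟨a, ha, b, hb, rfl⟩ := hG g
    have hb' : b ∈ Subgroup.centralizer (B : Set G) := by
      rw [Subgroup.mem_centralizer_iff]
      intro k hk
      have h1 : k * (a * b) = a * b * k := hg k (hBW hk)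
      have h2 : k * a = a * k := (hcomm a ha k hk).symm
      have : a * (k * b) = a * (b * k) := by
        calc a * (k * b) = k * a * b := by rw [← mul_assoc, ← h2]
          _ = a * (b * k) := by rw [mul_assoc, h1, mul_assoc]
      exact mul_left_cancel this
    have ha' : a ∈ Subgroup.centralizer ((W ⊓ A : Subgroup G) : Set G) := by
      rw [Subgroup.mem_centralizer_iff]
      rintro h ⟨hhW, hhA⟩
      have h1 : h * (a * b) = a * b * h := hg h hhW
      have h2 : h * b = b * h := hcomm h hhA b hb
      have : h * a * b = a * h * b := by
        calc h * a * b = h * (a * b) := by rw [mul_assoc]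
          _ = a * (b * h) := by rw [h1, mul_assoc]
          _ = a * h * b := by rw [← h2, ← mul_assoc]
      have := mul_right_cancel this
      rw [this]
    exact mul_mem (le_sup_left (α := Subgroup G) ⟨ha, ha'⟩)
      (le_sup_right (α := Subgroup G) ⟨hb, hb'⟩)
  · rintro x ⟨hxA, hxC⟩
    rw [Subgroup.mem_centralizer_iff]
    intro w hw
    obtain ⟨a, ha, b, hb, rfl⟩ := hG w
    have hbW : b ∈ W := hBW hb
    have haW : a ∈ W := by
      have : a = a * b * b⁻¹ := by group
      rw [this]; exact mul_mem hw (inv_mem hbW)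
    have h1 : a * x = x * a := hxC a ⟨haW, ha⟩
    have h2 : x * b = b * x := hcomm x hxA b hb
    calc a * b * x = a * (b * x) := by rw [mul_assoc]
      _ = a * x * b := by rw [← h2, mul_assoc]
      _ = x * (a * b) := by rw [h1, mul_assoc]
  · rintro y hy
    rw [Subgroup.mem_centralizer_iff]
    intro w _
    exact commZB hG hcomm y hy w

include hcomm in
lemma cent_inf_decomp {W : Subgroup G} (hBW : B ≤ W) :
    (A ⊓ Subgroup.centralizer ((W ⊓ A : Subgroup G) : Set G)) ⊓
      (B ⊓ Subgroup.centralizer (B : Set G)) = A ⊓ B := by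
  refine le_antisymm ?_ ?_
  · rintro x ⟨⟨hxA, _⟩, ⟨hxB, _⟩⟩; exact ⟨hxA, hxB⟩
  · rintro d ⟨hdA, hdB⟩
    refine ⟨⟨hdA, Subgroup.mem_centralizer_iff.mpr ?_⟩, hdB,
      Subgroup.mem_centralizer_iff.mpr ?_⟩
    · rintro h ⟨_, hhA⟩
      exact hcomm h hhA d hdB
    · intro k hk
      exact (hcomm d hdA k hk).symm

include hG hcomm in
lemma centK_decomp {K : Subgroup G} (hKB : K ≤ B) :
    Subgroup.centralizer (K : Set G) = (B ⊓ Subgroup.centralizer (K : Set G)) ⊔ A := by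
  refine le_antisymm ?_ (sup_le inf_le_right ?_)
  · intro g hg
    rw [Subgroup.mem_centralizer_iff] at hg
    obtain ⟨a, ha, b, hb, rfl⟩ := hG g
    have hb' : b ∈ Subgroup.centralizer (K : Set G) := by
      rw [Subgroup.mem_centralizer_iff]
      intro k hk
      have h1 : k * (a * b) = a * b * k := hg k hk
      have h2 : k * a = a * k := (hcomm a ha k (hKB hk)).symm
      have : a * (k * b) = a * (b * k) := by
        calc a * (k * b) = k * a * b := by rw [← mul_assoc, ← h2]
          _ = a * (b * k) := by rw [mul_assoc, h1, mul_assoc]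
      exact mul_left_cancel this
    have haC : a ∈ Subgroup.centralizer (K : Set G) := by
      rw [Subgroup.mem_centralizer_iff]
      intro k hk
      exact (hcomm a ha k (hKB hk)).symm
    have hbS : b ∈ (B ⊓ Subgroup.centralizer (K : Set G)) ⊔ A :=
      le_sup_left (α := Subgroup G) ⟨hb, hb'⟩
    have haS : a ∈ (B ⊓ Subgroup.centralizer (K : Set G)) ⊔ A :=
      le_sup_right (α := Subgroup G) ha
    exact mul_mem haS hbS
  · intro a ha
    rw [Subgroup.mem_centralizer_iff]
    intro k hk
    exact (hcomm a ha k (hKB hk)).symm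

include hcomm in
lemma centK_inf_decomp {K : Subgroup G} (hKB : K ≤ B) :
    (B ⊓ Subgroup.centralizer (K : Set G)) ⊓ A = A ⊓ B := by
  refine le_antisymm ?_ ?_
  · rintro x ⟨⟨hxB, _⟩, hxA⟩; exact ⟨hxA, hxB⟩
  · rintro d ⟨hdA, hdB⟩
    refine ⟨⟨hdB, Subgroup.mem_centralizer_iff.mpr ?_⟩, hdA⟩
    intro k hk
    exact (hcomm d hdA k (hKB hk)).symm

end CentralProduct

section Cards

variable [Finite G] {A B : Subgroup G}
variable (hG : ∀ g : G, ∃ a ∈ A, ∃ b ∈ B, g = a * b)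
variable (hcomm : ∀ a ∈ A, ∀ b ∈ B, a * b = b * a)

include hG hcomm

lemma C1 {W : Subgroup G} (hBW : B ≤ W) :
    Nat.card W * Nat.card (A ⊓ B : Subgroup G) =
      Nat.card (W ⊓ A : Subgroup G) * Nat.card B := by
  haveI : B.Normal := normalB hG hcomm
  calc Nat.card W * Nat.card (A ⊓ B : Subgroup G)
      = Nat.card ((W ⊓ A) ⊔ B : Subgroup G) * Nat.card ((W ⊓ A) ⊓ B : Subgroup G) := by
        rw [← sup_decomp hG hBW, inf_decomp hBW]
    _ = Nat.card (W ⊓ A : Subgroup G) * Nat.card B := EQN _ _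

lemma C2 {W : Subgroup G} (hBW : B ≤ W) :
    Nat.card (Subgroup.centralizer (W : Set G)) * Nat.card (A ⊓ B : Subgroup G) =
      Nat.card (A ⊓ Subgroup.centralizer ((W ⊓ A : Subgroup G) : Set G) : Subgroup G) *
        Nat.card (B ⊓ Subgroup.centralizer (B : Set G) : Subgroup G) := by
  haveI : (B ⊓ Subgroup.centralizer (B : Set G)).Normal :=
    normal_of_comm (commZB hG hcomm)
  calc Nat.card (Subgroup.centralizer (W : Set G)) * Nat.card (A ⊓ B : Subgroup G)
      = Nat.card ((A ⊓ Subgroup.centralizer ((W ⊓ A : Subgroup G) : Set G)) ⊔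
          (B ⊓ Subgroup.centralizer (B : Set G)) : Subgroup G) *
        Nat.card ((A ⊓ Subgroup.centralizer ((W ⊓ A : Subgroup G) : Set G)) ⊓
          (B ⊓ Subgroup.centralizer (B : Set G)) : Subgroup G) := by
        rw [← cent_decomp hG hcomm hBW, cent_inf_decomp hcomm hBW]
    _ = _ := EQN _ _

lemma C3 {K : Subgroup G} (hKB : K ≤ B)
    (hG' : ∀ g : G, ∃ b ∈ B, ∃ a ∈ A, g = b * a) :
    Nat.card (Subgroup.centralizer (K : Set G)) * Nat.card (A ⊓ B : Subgroup G) =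
      Nat.card (B ⊓ Subgroup.centralizer (K : Set G) : Subgroup G) * Nat.card A := by
  haveI : A.Normal := normalB hG' (fun b hb a ha => (hcomm a ha b hb).symm)
  calc Nat.card (Subgroup.centralizer (K : Set G)) * Nat.card (A ⊓ B : Subgroup G)
      = Nat.card ((B ⊓ Subgroup.centralizer (K : Set G)) ⊔ A : Subgroup G) *
        Nat.card ((B ⊓ Subgroup.centralizer (K : Set G)) ⊓ A : Subgroup G) := by
        rw [← centK_decomp hG hcomm hKB, centK_inf_decomp hcomm hKB]
    _ = _ := EQN _ _

lemma M1 {W : Subgroup G} (hBW : B ≤ W) :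
    m (⊤ : Subgroup G) W * (Nat.card (A ⊓ B : Subgroup G) * Nat.card (A ⊓ B : Subgroup G)) =
      m A (W ⊓ A) * (Nat.card B *
        Nat.card (B ⊓ Subgroup.centralizer (B : Set G) : Subgroup G)) := by
  rw [m_top]; unfold m
  calc Nat.card W * Nat.card (Subgroup.centralizer (W : Set G)) *
      (Nat.card (A ⊓ B : Subgroup G) * Nat.card (A ⊓ B : Subgroup G))
      = (Nat.card W * Nat.card (A ⊓ B : Subgroup G)) *
        (Nat.card (Subgroup.centralizer (W : Set G)) * Nat.card (A ⊓ B : Subgroup G)) := by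
        ring
    _ = (Nat.card (W ⊓ A : Subgroup G) * Nat.card B) *
        (Nat.card (A ⊓ Subgroup.centralizer ((W ⊓ A : Subgroup G) : Set G) : Subgroup G) *
          Nat.card (B ⊓ Subgroup.centralizer (B : Set G) : Subgroup G)) := by
        rw [C1 hG hcomm hBW, C2 hG hcomm hBW]
    _ = _ := by ring

lemma M2 :
    m (⊤ : Subgroup G) ⊤ * (Nat.card (A ⊓ B : Subgroup G) * Nat.card (A ⊓ B : Subgroup G)) =
      m A A * (Nat.card B *
        Nat.card (B ⊓ Subgroup.centralizer (B : Set G) : Subgroup G)) := by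
  have := M1 hG hcomm (le_top : B ≤ ⊤)
  rwa [top_inf_eq] at this

lemma M3 {K : Subgroup G} (hKB : K ≤ B)
    (hG' : ∀ g : G, ∃ b ∈ B, ∃ a ∈ A, g = b * a) :
    m (⊤ : Subgroup G) K * Nat.card (A ⊓ B : Subgroup G) = m B K * Nat.card A := by
  rw [m_top]; unfold m
  calc Nat.card K * Nat.card (Subgroup.centralizer (K : Set G)) *
      Nat.card (A ⊓ B : Subgroup G)
      = Nat.card K * (Nat.card (Subgroup.centralizer (K : Set G)) *
        Nat.card (A ⊓ B : Subgroup G)) := by ring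
    _ = Nat.card K * (Nat.card (B ⊓ Subgroup.centralizer (K : Set G) : Subgroup G) *
        Nat.card A) := by rw [C3 hG hcomm hKB hG']
    _ = _ := by ring

end Cards

section Main

variable [Finite G] {A B : Subgroup G}
variable (hG : ∀ g : G, ∃ a ∈ A, ∃ b ∈ B, g = a * b)
variable (hcomm : ∀ a ∈ A, ∀ b ∈ B, a * b = b * a)

include hG hcomm

lemma MA (htop : ∀ L : Subgroup G, L ≤ ⊤ → m ⊤ L ≤ m (⊤ : Subgroup G) ⊤) {H : Subgroup G} (hHA : H ≤ A) :
    m A H ≤ m A A := by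
  haveI : B.Normal := normalB hG hcomm
  have step1 : m A H ≤ m A ((H ⊔ B) ⊓ A) := by
    unfold m
    refine Nat.mul_le_mul (cardle (le_inf le_sup_left hHA)) (cardle ?_)
    rintro x ⟨hxA, hxC⟩
    refine ⟨hxA, Subgroup.mem_centralizer_iff.mpr ?_⟩
    rintro w ⟨hwW, hwA⟩
    have hw : w ∈ ((H : Set G) * (B : Set G)) := by
      rw [← Subgroup.mul_normal H B]; exact hwW
    obtain ⟨h, hh, b, hb, rfl⟩ := hw
    have h1 : h * x = x * h := Subgroup.mem_centralizer_iff.mp hxC h hh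
    have h2 : x * b = b * x := hcomm x hxA b hb
    calc h * b * x = h * (x * b) := by rw [mul_assoc, ← h2]
      _ = x * (h * b) := by rw [← mul_assoc, h1, mul_assoc]
  have e1 := M1 hG hcomm (le_sup_right : B ≤ H ⊔ B)
  have e2 := M2 hG hcomm
  have step2 : m A ((H ⊔ B) ⊓ A) ≤ m A A := by
    have hpos : 0 < Nat.card B *
        Nat.card (B ⊓ Subgroup.centralizer (B : Set G) : Subgroup G) :=
      Nat.mul_pos Nat.card_pos Nat.card_pos
    refine Nat.le_of_mul_le_mul_right ?_ hpos
    rw [← e1, ← e2]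
    exact Nat.mul_le_mul_right _ (htop _ le_top)
  exact le_trans step1 step2

lemma MB (hG' : ∀ g : G, ∃ b ∈ B, ∃ a ∈ A, g = b * a)
    (hA : ∀ L ≤ A, m A L ≤ m A A) (hB : ∀ L ≤ B, m B L ≤ m B B)
    (U : Subgroup G) : m ⊤ U ≤ m (⊤ : Subgroup G) ⊤ := by
  have key1 : m ⊤ (U ⊔ B) ≤ m (⊤ : Subgroup G) ⊤ := by
    have hpos : 0 < Nat.card (A ⊓ B : Subgroup G) * Nat.card (A ⊓ B : Subgroup G) :=
      Nat.mul_pos Nat.card_pos Nat.card_pos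
    refine Nat.le_of_mul_le_mul_right ?_ hpos
    rw [M1 hG hcomm (le_sup_right : B ≤ U ⊔ B), M2 hG hcomm]
    exact Nat.mul_le_mul_right _ (hA _ inf_le_right)
  have key2 : m ⊤ (U ⊓ B) ≤ m (⊤ : Subgroup G) B := by
    refine Nat.le_of_mul_le_mul_right ?_ (Nat.card_pos (α := (A ⊓ B : Subgroup G)))
    rw [M3 hG hcomm inf_le_right hG', M3 hG hcomm (le_refl B) hG']
    exact Nat.mul_le_mul_right _ (hB _ inf_le_right)
  refine Nat.le_of_mul_le_mul_right ?_ (m_pos (⊤ : Subgroup G) B)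
  calc m ⊤ U * m (⊤ : Subgroup G) B ≤ m ⊤ (U ⊔ B) * m ⊤ (U ⊓ B) := m_sup_inf U B
    _ ≤ m (⊤ : Subgroup G) ⊤ * m (⊤ : Subgroup G) B := Nat.mul_le_mul key1 key2

end Main

end Aux

theorem stmt16 {G : Type*} [Group G] [Finite G] (A B : Subgroup G)
    (hG : ∀ g : G, ∃ a ∈ A, ∃ b ∈ B, g = a * b)
    (hcomm : ∀ a ∈ A, ∀ b ∈ B, a * b = b * a) :
    (⊤ : Subgroup G) ∈ CD (⊤ : Subgroup G) ↔ A ∈ CD A ∧ B ∈ CD B := by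
  have hG' : ∀ g : G, ∃ b ∈ B, ∃ a ∈ A, g = b * a := by
    intro g
    obtain ⟨a, ha, b, hb, rfl⟩ := hG g
    exact ⟨b, hb, a, ha, hcomm a ha b hb⟩
  have hcomm' : ∀ b ∈ B, ∀ a ∈ A, b * a = a * b := fun b hb a ha => (hcomm a ha b hb).symm
  have hGsym : ∀ g : G, ∃ a ∈ A, ∃ b ∈ B, g = b * a := by
    intro g
    obtain ⟨b, hb, a, ha, h⟩ := hG' g
    exact ⟨a, ha, b, hb, h⟩
  simp only [CD, Set.mem_setOf_eq]
  constructor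
  · rintro ⟨-, htop⟩
    exact ⟨⟨le_refl A, fun L hL => MA hG hcomm htop hL⟩,
           ⟨le_refl B, fun L hL => MA hG' hcomm' htop hL⟩⟩
  · rintro ⟨⟨-, hA⟩, ⟨-, hB⟩⟩
    exact ⟨le_top, fun L _ => MB hG hcomm hG' hA hB L⟩
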